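/- arXiv:2310.01896 — 5 statements merged into one kernel-verified Lean document; each statement's English description precedes it below -/
import Mathlib

section
/- Let α, β > 0, let A be an n×n complex matrix with ‖A‖ < 1 (and A ≠ 0) for a submultiplicative matrix norm ‖·‖ induced by a vector norm, and let ε > 0. If m is a positive integer with m ≥ max{ ⌈(2−β)/α + 1⌉, ⌈ln(ε(1−‖A‖))/ln(‖A‖)⌉ + 1 }, then the Taylor truncation error satisfies R_m(A) := ‖E_{α,β}(A) − Σ_{k=0}^{m} A^k/Γ(αk+β)‖ ≤ ε. -/
/-!
Once `(2 - β) / α ≤ k`, we have `αk + β ≥ 2`, hence `Γ(αk + β) ≥ Γ(2) = 1`, and by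
submultiplicativity the `k`-th term has norm at most `‖A‖^k`. The tail from `m + 1` on is then
dominated by the geometric tail `‖A‖^(m+1) / (1 - ‖A‖)`, and the logarithmic condition on `m` says
exactly that `‖A‖^(m+1) ≤ ε (1 - ‖A‖)`. The series is summed in the normed space defined by `‖·‖`;
as the space of matrices is finite-dimensional, that norm induces its usual topology.
-/

open scoped Matrix

/-- The matrix Mittag-Leffler function `E_{α,β}(A) = ∑_{k=0}^∞ A^k / Γ(αk+β)`. -/
noncomputable def ML {n : ℕ} (α β : ℝ) (A : Matrix (Fin n) (Fin n) ℂ) :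
    Matrix (Fin n) (Fin n) ℂ :=
  ∑' k : ℕ, (Real.Gamma (α * k + β))⁻¹ • A ^ k

open Finset

theorem Real.one_le_Gamma {x : ℝ} (hx : 2 ≤ x) : 1 ≤ Real.Gamma x :=
  Real.Gamma_two ▸ Real.Gamma_strictMonoOn_Ici.monotoneOn Set.self_mem_Ici hx hx

theorem Real.one_le_Gamma_mul_add {α β x : ℝ} (hα : 0 < α) (hx : (2 - β) / α ≤ x) :
    1 ≤ Real.Gamma (α * x + β) := by
  refine Real.one_le_Gamma ?_
  linarith [(div_le_iff₀' hα).mp hx]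

theorem pow_le_of_log_div_log_le {a c : ℝ} {N : ℕ} (ha0 : 0 ≤ a) (ha1 : a < 1) (hc : 0 < c)
    (hN : N ≠ 0) (h : Real.log c / Real.log a ≤ N) : a ^ N ≤ c := by
  rcases ha0.eq_or_lt with rfl | ha0
  · simpa [zero_pow hN] using hc.le
  · rwa [Real.pow_le_iff_le_log ha0 hc, ← div_le_iff_of_neg (Real.log_neg ha0 ha1)]

section GeometricTail

variable {E : Type*} [NormedAddCommGroup E] {f : ℕ → E} {a : ℝ} {N : ℕ}

theorem hasSum_pow_mul_geometric (ha0 : 0 ≤ a) (ha1 : a < 1) (N : ℕ) :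
    HasSum (fun k ↦ a ^ N * a ^ k) (a ^ N / (1 - a)) := by
  simpa only [div_eq_mul_inv] using (hasSum_geometric_of_lt_one ha0 ha1).mul_left (a ^ N)

theorem norm_le_pow_mul_of_norm_le_pow (hf : ∀ k, N ≤ k → ‖f k‖ ≤ a ^ k) (k : ℕ) :
    ‖f (k + N)‖ ≤ a ^ N * a ^ k := by
  rw [← pow_add, add_comm N]
  exact hf _ (Nat.le_add_left N k)

theorem summable_of_norm_le_pow [CompleteSpace E] (ha0 : 0 ≤ a) (ha1 : a < 1)
    (hf : ∀ k, N ≤ k → ‖f k‖ ≤ a ^ k) : Summable f :=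
  (summable_nat_add_iff N).mp <|
    (hasSum_pow_mul_geometric ha0 ha1 N).summable.of_norm_bounded
      (norm_le_pow_mul_of_norm_le_pow hf)

theorem norm_tsum_sub_sum_range_le_of_norm_le_pow [CompleteSpace E] (ha0 : 0 ≤ a) (ha1 : a < 1)
    (hf : ∀ k, N ≤ k → ‖f k‖ ≤ a ^ k) :
    ‖∑' k, f k - ∑ k ∈ range N, f k‖ ≤ a ^ N / (1 - a) := by
  rw [← (summable_of_norm_le_pow ha0 ha1 hf).sum_add_tsum_nat_add N, add_sub_cancel_left]
  exact tsum_of_norm_bounded (hasSum_pow_mul_geometric ha0 ha1 N)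
    (norm_le_pow_mul_of_norm_le_pow hf)

end GeometricTail

/-- `V` with the topology of the norm `p` in place of its own. -/
def NormedBy {V : Type*} [AddCommGroup V] (_p : AddGroupNorm V) : Type _ := V

namespace NormedBy

variable {𝕜 V : Type*} [AddCommGroup V] (p : AddGroupNorm V)

instance : NormedAddCommGroup (NormedBy p) := p.toNormedAddCommGroup

instance [Semiring 𝕜] [Module 𝕜 V] : Module 𝕜 (NormedBy p) := inferInstanceAs (Module 𝕜 V)

instance [DivisionRing 𝕜] [Module 𝕜 V] [FiniteDimensional 𝕜 V] :
    FiniteDimensional 𝕜 (NormedBy p) :=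
  inferInstanceAs (FiniteDimensional 𝕜 V)

end NormedBy

theorem AddGroupNorm.tsum_sub_sum_range_le_of_le_pow {𝕜 V : Type*} [NontriviallyNormedField 𝕜]
    [CompleteSpace 𝕜] [AddCommGroup V] [Module 𝕜 V] [TopologicalSpace V]
    [IsTopologicalAddGroup V] [ContinuousSMul 𝕜 V] [T2Space V] [FiniteDimensional 𝕜 V]
    (p : AddGroupNorm V) (hp : ∀ (c : 𝕜) x, p (c • x) = ‖c‖ * p x) {f : ℕ → V} {a : ℝ} {N : ℕ}
    (ha0 : 0 ≤ a) (ha1 : a < 1) (hf : ∀ k, N ≤ k → p (f k) ≤ a ^ k) :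
    p (∑' k, f k - ∑ k ∈ range N, f k) ≤ a ^ N / (1 - a) := by
  let _ : NormedSpace 𝕜 (NormedBy p) := ⟨fun c x ↦ (hp c x).le⟩
  have : CompleteSpace (NormedBy p) := FiniteDimensional.complete 𝕜 _
  let g : ℕ → NormedBy p := f
  let e : NormedBy p →L[𝕜] V := LinearMap.toContinuousLinearMap LinearMap.id
  have hsum : Summable g := summable_of_norm_le_pow ha0 ha1 hf
  have hsum_eq : ∑' k, f k = e (∑' k, g k) := (hsum.hasSum.mapL e).tsum_eq
  rw [hsum_eq]
  exact norm_tsum_sub_sum_range_le_of_norm_le_pow (f := g) ha0 ha1 hf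

def RingNorm.ofHomogeneous {𝕜 R : Type*} [NormedField 𝕜] [Ring R] [Module 𝕜 R] (p : R → ℝ)
    (hdef : ∀ x, p x = 0 ↔ x = 0) (hadd : ∀ x y, p (x + y) ≤ p x + p y)
    (hsmul : ∀ (c : 𝕜) x, p (c • x) = ‖c‖ * p x) (hmul : ∀ x y, p (x * y) ≤ p x * p y) :
    RingNorm R where
  toFun := p
  map_zero' := (hdef 0).2 rfl
  add_le' := hadd
  neg' x := by rw [← neg_one_smul 𝕜 x, hsmul, norm_neg, norm_one, one_mul]
  mul_le' := hmul
  eq_zero_of_map_eq_zero' x := (hdef x).1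

theorem taylor_truncation_error_le_general {n : ℕ} (α β ε : ℝ) (hα : 0 < α)
    (hε : 0 < ε)
    (nrm : Matrix (Fin n) (Fin n) ℂ → ℝ)
    (hnrm_def : ∀ A, nrm A = 0 ↔ A = 0)
    (hnrm_add : ∀ A B, nrm (A + B) ≤ nrm A + nrm B)
    (hnrm_smul : ∀ (c : ℂ) A, nrm (c • A) = ‖c‖ * nrm A)
    (hnrm_mul : ∀ A B, nrm (A * B) ≤ nrm A * nrm B)
    (A : Matrix (Fin n) (Fin n) ℂ) (hA : nrm A < 1)
    (m : ℕ)
    (hge : max ⌈(2 - β) / α + 1⌉ (⌈Real.log (ε * (1 - nrm A)) / Real.log (nrm A)⌉ + 1)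
      ≤ (m : ℤ)) :
    nrm (ML α β A - ∑ k ∈ Finset.range (m + 1), (Real.Gamma (α * k + β))⁻¹ • A ^ k) ≤ ε := by
  let p := RingNorm.ofHomogeneous nrm hnrm_def hnrm_add hnrm_smul hnrm_mul
  have ha0 : 0 ≤ nrm A := apply_nonneg p A
  obtain ⟨hm_Gamma, hm_log⟩ := max_le_iff.mp hge
  have hterm : ∀ k, m + 1 ≤ k → nrm ((Real.Gamma (α * k + β))⁻¹ • A ^ k) ≤ nrm A ^ k := by
    intro k hk
    have hk' : (2 - β) / α + 1 ≤ k :=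
      Int.ceil_le.mp (hm_Gamma.trans (by exact_mod_cast hk.trans' m.le_succ))
    have hΓ := Real.one_le_Gamma_mul_add hα (by linarith : (2 - β) / α ≤ k)
    rw [← Complex.coe_smul, hnrm_smul, Complex.norm_real, Real.norm_eq_abs,
      abs_of_pos (inv_pos.mpr (zero_lt_one.trans_le hΓ))]
    calc _ ≤ 1 * nrm A ^ k := mul_le_mul (inv_le_one_of_one_le₀ hΓ)
          (map_pow_le_pow p A (by omega)) (apply_nonneg p _) zero_le_one
      _ = nrm A ^ k := one_mul _
  have hpow : nrm A ^ (m + 1) ≤ ε * (1 - nrm A) := by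
    refine pow_le_of_log_div_log_le ha0 hA (by nlinarith) m.succ_ne_zero ?_
    exact_mod_cast Int.ceil_le.mp (by omega : _ ≤ ((m + 1 : ℕ) : ℤ))
  calc _ ≤ nrm A ^ (m + 1) / (1 - nrm A) :=
        p.tsum_sub_sum_range_le_of_le_pow hnrm_smul ha0 hA hterm
    _ ≤ ε := by rw [div_le_iff₀ (by linarith)]; exact hpow

/-- Proposition 1: if `m ≥ max{⌈(2−β)/α + 1⌉, ⌈ln(ε(1−‖A‖))/ln ‖A‖⌉ + 1}`, then the
Taylor truncation error satisfies `R_m(A) ≤ ε`, for any submultiplicative matrix norm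
induced by a vector norm (so `‖I‖ = 1`). -/
theorem taylor_truncation_error_le {n : ℕ} (α β ε : ℝ) (hα : 0 < α) (hβ : 0 < β)
    (hε : 0 < ε)
    (nrm : Matrix (Fin n) (Fin n) ℂ → ℝ)
    (hnrm_nonneg : ∀ A, 0 ≤ nrm A)
    (hnrm_def : ∀ A, nrm A = 0 ↔ A = 0)
    (hnrm_add : ∀ A B, nrm (A + B) ≤ nrm A + nrm B)
    (hnrm_smul : ∀ (c : ℂ) A, nrm (c • A) = ‖c‖ * nrm A)
    (hnrm_mul : ∀ A B, nrm (A * B) ≤ nrm A * nrm B)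
    (hnrm_one : nrm 1 = 1)
    (A : Matrix (Fin n) (Fin n) ℂ) (hA0 : A ≠ 0) (hA : nrm A < 1)
    (m : ℕ) (hm : 0 < m)
    (hge : max ⌈(2 - β) / α + 1⌉ (⌈Real.log (ε * (1 - nrm A)) / Real.log (nrm A)⌉ + 1)
      ≤ (m : ℤ)) :
    nrm (ML α β A - ∑ k ∈ Finset.range (m + 1), (Real.Gamma (α * k + β))⁻¹ • A ^ k) ≤ ε :=
  taylor_truncation_error_le_general α β ε hα hε nrm hnrm_def hnrm_add hnrm_smul hnrm_mul A hA m hge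
end

section
/- Let α, β > 0, let A be an n×n complex matrix with ‖A‖ < 1 for a submultiplicative matrix norm ‖·‖ induced by a vector norm, let μ > 0 and let m be a positive integer such that ‖A^{m+1}‖/Γ(α(m+1)+β) ≤ μ and α(m+1)+β ≥ 2. Then the Taylor truncation error satisfies R_m(A) := ‖E_{α,β}(A) − Σ_{k=0}^{m} A^k/Γ(αk+β)‖ ≤ μ/(1−‖A‖). -/
/-!
Since `α(m+1)+β ≥ 2` and Γ increases on `[2, ∞)`, every coefficient `1/Γ(αk+β)` with `k > m` is
at most `1/Γ(α(m+1)+β)`; with submultiplicativity the `(m+1+j)`-th term has norm at most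
`μ ‖A‖^j`, so the tail is dominated by a geometric series with sum `μ / (1 - ‖A‖)`.
To sum in the norm `nrm`, give the matrix algebra the normed structure of `nrm`: the space is
finite-dimensional, so this does not change its topology, hence neither the value of the series.
-/

open scoped Matrix

open Finset

theorem norm_tsum_sub_sum_range_le_of_le_geometric {E : Type*} [NormedAddCommGroup E]
    [CompleteSpace E] {f : ℕ → E} {N : ℕ} {μ r : ℝ} (hr₀ : 0 ≤ r) (hr₁ : r < 1)
    (hf : ∀ j, ‖f (j + N)‖ ≤ μ * r ^ j) :
    ‖∑' k, f k - ∑ k ∈ range N, f k‖ ≤ μ / (1 - r) := by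
  have hgeom : HasSum (fun j ↦ μ * r ^ j) (μ / (1 - r)) :=
    (hasSum_geometric_of_lt_one hr₀ hr₁).mul_left μ
  have hf_summable : Summable f :=
    (summable_nat_add_iff N).mp (hgeom.summable.of_norm_bounded hf)
  rw [← hf_summable.sum_add_tsum_nat_add N, add_sub_cancel_left]
  exact tsum_of_norm_bounded hgeom hf

theorem norm_pow_add_le_norm_pow_mul {R : Type*} [SeminormedRing R] (a : R) (j N : ℕ) :
    ‖a ^ (j + N)‖ ≤ ‖a‖ ^ j * ‖a ^ N‖ := by
  induction j with
  | zero => simp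
  | succ j ih =>
    calc ‖a ^ (j + 1 + N)‖ = ‖a * a ^ (j + N)‖ := by rw [add_right_comm, pow_succ']
      _ ≤ ‖a‖ * (‖a‖ ^ j * ‖a ^ N‖) := norm_mul_le_of_le le_rfl ih
      _ = ‖a‖ ^ (j + 1) * ‖a ^ N‖ := by ring

section GammaSeries

variable {R : Type*} {α β : ℝ} {N : ℕ}

theorem norm_gamma_inv_smul_pow_add_le [SeminormedRing R] [NormedSpace ℝ R] (hα : 0 ≤ α)
    (hN : 2 ≤ α * N + β) (a : R) (j : ℕ) :
    ‖(Real.Gamma (α * ↑(j + N) + β))⁻¹ • a ^ (j + N)‖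
      ≤ ‖a ^ N‖ / Real.Gamma (α * N + β) * ‖a‖ ^ j := by
  have hle : α * N + β ≤ α * ↑(j + N) + β := by
    push_cast
    nlinarith [j.cast_nonneg (α := ℝ)]
  have hΓ_pos : 0 < Real.Gamma (α * N + β) := Real.Gamma_pos_of_pos (by linarith)
  have hΓ_mono : Real.Gamma (α * N + β) ≤ Real.Gamma (α * ↑(j + N) + β) :=
    Real.Gamma_strictMonoOn_Ici.monotoneOn hN (hN.trans hle) hle
  rw [norm_smul, Real.norm_of_nonneg (inv_nonneg.mpr (hΓ_pos.trans_le hΓ_mono).le)]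
  calc (Real.Gamma (α * ↑(j + N) + β))⁻¹ * ‖a ^ (j + N)‖
      ≤ (Real.Gamma (α * N + β))⁻¹ * (‖a‖ ^ j * ‖a ^ N‖) :=
        mul_le_mul (inv_anti₀ hΓ_pos hΓ_mono) (norm_pow_add_le_norm_pow_mul a j N)
          (norm_nonneg _) (inv_nonneg.mpr hΓ_pos.le)
    _ = ‖a ^ N‖ / Real.Gamma (α * N + β) * ‖a‖ ^ j := by ring

theorem norm_tsum_gamma_inv_smul_pow_sub_sum_le [NormedRing R] [NormedSpace ℝ R]
    [CompleteSpace R] {μ : ℝ} (hα : 0 ≤ α) (hN : 2 ≤ α * N + β) {a : R} (ha : ‖a‖ < 1)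
    (haN : ‖a ^ N‖ / Real.Gamma (α * N + β) ≤ μ) :
    ‖∑' k : ℕ, (Real.Gamma (α * k + β))⁻¹ • a ^ k
        - ∑ k ∈ range N, (Real.Gamma (α * k + β))⁻¹ • a ^ k‖ ≤ μ / (1 - ‖a‖) :=
  norm_tsum_sub_sum_range_le_of_le_geometric (norm_nonneg a) ha fun j ↦
    (norm_gamma_inv_smul_pow_add_le hα hN a j).trans
      (mul_le_mul_of_nonneg_right haN (pow_nonneg (norm_nonneg a) j))

end GammaSeries

def Matrix.algebraNormOfComplexHomogeneous {m : Type*} [Fintype m] [DecidableEq m]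
    (f : Matrix m m ℂ → ℝ) (hf_eq_zero : ∀ A, f A = 0 ↔ A = 0)
    (hf_add : ∀ A B, f (A + B) ≤ f A + f B) (hf_smul : ∀ (c : ℂ) A, f (c • A) = ‖c‖ * f A)
    (hf_mul : ∀ A B, f (A * B) ≤ f A * f B) : AlgebraNorm ℝ (Matrix m m ℂ) where
  toFun := f
  map_zero' := (hf_eq_zero 0).2 rfl
  add_le' := hf_add
  neg' A := by rw [← neg_one_smul ℂ A, hf_smul, norm_neg, norm_one, one_mul]
  smul' c A := by
    have hc : c • A = (c : ℂ) • A := by ext; simp [Complex.real_smul]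
    rw [hc, hf_smul, Complex.norm_real]
  mul_le' := hf_mul
  eq_zero_of_map_eq_zero' A := (hf_eq_zero A).1

/-- A copy of `S` carrying the norm `p` and its topology instead of those of `S`. -/
def WithAlgebraNorm {𝕜 S : Type*} [NormedField 𝕜] [Ring S] [Algebra 𝕜 S]
    (_p : AlgebraNorm 𝕜 S) : Type _ :=
  S

namespace WithAlgebraNorm

section NormedField

variable {𝕜 S : Type*} [NormedField 𝕜] [Ring S] [Algebra 𝕜 S] (p : AlgebraNorm 𝕜 S)

instance : Ring (WithAlgebraNorm p) := inferInstanceAs (Ring S)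

instance : Algebra 𝕜 (WithAlgebraNorm p) := inferInstanceAs (Algebra 𝕜 S)

instance : NormedRing (WithAlgebraNorm p) :=
  RingNorm.toNormedRing (R := WithAlgebraNorm p) p.toRingNorm

instance : NormedAlgebra 𝕜 (WithAlgebraNorm p) where
  norm_smul_le c x := (map_smul_eq_mul p c x).le

end NormedField

variable {𝕜 S : Type*} [NontriviallyNormedField 𝕜] [CompleteSpace 𝕜] [Ring S] [Algebra 𝕜 S]
  [FiniteDimensional 𝕜 S] (p : AlgebraNorm 𝕜 S)

instance : FiniteDimensional 𝕜 (WithAlgebraNorm p) := inferInstanceAs (FiniteDimensional 𝕜 S)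

instance : CompleteSpace (WithAlgebraNorm p) := FiniteDimensional.complete 𝕜 _

variable [TopologicalSpace S] [IsTopologicalAddGroup S] [ContinuousSMul 𝕜 S] [T2Space S]

noncomputable def equiv : WithAlgebraNorm p ≃L[𝕜] S :=
  LinearEquiv.toContinuousLinearEquiv (E := WithAlgebraNorm p) (LinearEquiv.refl 𝕜 S)

end WithAlgebraNorm

theorem taylor_truncation_error_le_of_term_le_general {n : ℕ} (α β μ : ℝ)
    (hα : 0 < α)
    (nrm : Matrix (Fin n) (Fin n) ℂ → ℝ)
    (hnrm_def : ∀ A, nrm A = 0 ↔ A = 0)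
    (hnrm_add : ∀ A B, nrm (A + B) ≤ nrm A + nrm B)
    (hnrm_smul : ∀ (c : ℂ) A, nrm (c • A) = ‖c‖ * nrm A)
    (hnrm_mul : ∀ A B, nrm (A * B) ≤ nrm A * nrm B)
    (A : Matrix (Fin n) (Fin n) ℂ) (hA : nrm A < 1)
    (m : ℕ)
    (hAm : nrm (A ^ (m + 1)) / Real.Gamma (α * (m + 1) + β) ≤ μ)
    (h2 : 2 ≤ α * (m + 1) + β) :
    nrm (ML α β A - ∑ k ∈ Finset.range (m + 1), (Real.Gamma (α * k + β))⁻¹ • A ^ k)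
      ≤ μ / (1 - nrm A) := by
  let p := Matrix.algebraNormOfComplexHomogeneous nrm hnrm_def hnrm_add hnrm_smul hnrm_mul
  let e := WithAlgebraNorm.equiv p
  have hML : ML α β A = e (∑' k : ℕ, (Real.Gamma (α * k + β))⁻¹ • (e.symm A) ^ k) := by
    rw [e.map_tsum]
    rfl
  rw [hML]
  exact norm_tsum_gamma_inv_smul_pow_sub_sum_le (a := e.symm A) hα.le (by exact_mod_cast h2) hA
    (by exact_mod_cast hAm)

/-- Proposition 2: if `‖A‖ < 1`, `‖A^{m+1}‖ / Γ(α(m+1)+β) ≤ μ` and `α(m+1)+β ≥ 2`,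
then the Taylor truncation error satisfies `R_m(A) ≤ μ/(1−‖A‖)`, for any
submultiplicative matrix norm induced by a vector norm. -/
theorem taylor_truncation_error_le_of_term_le {n : ℕ} (α β μ : ℝ)
    (hα : 0 < α) (hβ : 0 < β) (hμ : 0 < μ)
    (nrm : Matrix (Fin n) (Fin n) ℂ → ℝ)
    (hnrm_nonneg : ∀ A, 0 ≤ nrm A)
    (hnrm_def : ∀ A, nrm A = 0 ↔ A = 0)
    (hnrm_add : ∀ A B, nrm (A + B) ≤ nrm A + nrm B)
    (hnrm_smul : ∀ (c : ℂ) A, nrm (c • A) = ‖c‖ * nrm A)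
    (hnrm_mul : ∀ A B, nrm (A * B) ≤ nrm A * nrm B)
    (hnrm_one : nrm 1 = 1)
    (A : Matrix (Fin n) (Fin n) ℂ) (hA : nrm A < 1)
    (m : ℕ) (hm : 0 < m)
    (hAm : nrm (A ^ (m + 1)) / Real.Gamma (α * (m + 1) + β) ≤ μ)
    (h2 : 2 ≤ α * (m + 1) + β) :
    nrm (ML α β A - ∑ k ∈ Finset.range (m + 1), (Real.Gamma (α * k + β))⁻¹ • A ^ k)
      ≤ μ / (1 - nrm A) :=
  taylor_truncation_error_le_of_term_le_general α β μ hα nrm hnrm_def hnrm_add hnrm_smul hnrm_mul A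
    hA m hAm h2
end

section
/- Let α, β > 0, let A be an n×n complex matrix, let m be a natural number and let a > 0 be such that Γ(αk+β) ≥ a^k for all integers k ≥ m. If b := ‖A‖/a < 1, where ‖·‖ is a submultiplicative matrix norm induced by a vector norm, then the Taylor truncation error satisfies R_m(A) := ‖E_{α,β}(A) − Σ_{k=0}^{m} A^k/Γ(αk+β)‖ ≤ b^{m+1}/(1−b). -/
/-!
The terms of index `k > m` have norm at most `‖A‖ ^ k / a ^ k = b ^ k`, so the tail of the series
is dominated by a geometric series with sum `b ^ (m + 1) / (1 - b)`. The only subtlety is that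
`ML` is a `tsum` for the entrywise topology, whereas the estimate is in the arbitrary norm `nrm`.
Both directions of norm equivalence come from matrix units `E i j`: `X = ∑ X i j • E i j` makes
`nrm` continuous, and `E i i * X * E j j = X i j • E i j` together with submultiplicativity bounds
each entry by a multiple of `nrm X`, which makes the tail summable.
-/

open scoped Matrix

open Finset

namespace Seminorm

variable {𝕜 E : Type*} [NormedField 𝕜]

theorem map_sum_le [AddCommGroup E] [Module 𝕜 E] (p : Seminorm 𝕜 E) {ι : Type*} (s : Finset ι)
    (f : ι → E) : p (∑ i ∈ s, f i) ≤ ∑ i ∈ s, p (f i) :=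
  le_sum_of_subadditive p (map_zero p).le (map_add_le_add p) s f

theorem map_pow_le_pow_of_mul_le [Ring E] [Module 𝕜 E] (p : Seminorm 𝕜 E)
    (hmul : ∀ x y, p (x * y) ≤ p x * p y) (x : E) {k : ℕ} (hk : k ≠ 0) :
    p (x ^ k) ≤ p x ^ k :=
  map_pow_le_pow ({ p.toAddGroupSeminorm with mul_le' := hmul } : RingSeminorm E) x hk

theorem map_inv_smul_pow_le [Ring E] [Module ℝ E] (p : Seminorm ℝ E)
    (hmul : ∀ x y, p (x * y) ≤ p x * p y) (x : E) {a c : ℝ} (ha : 0 < a) {k : ℕ} (hk : k ≠ 0)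
    (hc : a ^ k ≤ c) : p (c⁻¹ • x ^ k) ≤ (p x / a) ^ k := by
  have hak : 0 < a ^ k := pow_pos ha k
  calc p (c⁻¹ • x ^ k) = c⁻¹ * p (x ^ k) := by
        rw [map_smul_eq_mul, Real.norm_of_nonneg (inv_nonneg.2 (hak.le.trans hc))]
    _ ≤ (a ^ k)⁻¹ * p x ^ k := by
        gcongr
        exact p.map_pow_le_pow_of_mul_le hmul x hk
    _ = (p x / a) ^ k := by rw [div_pow, inv_mul_eq_div]

end Seminorm

theorem HasSum.seminorm_le_of_bounded {𝕜 E ι : Type*} [NormedField 𝕜] [AddCommGroup E]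
    [Module 𝕜 E] [TopologicalSpace E] {p : Seminorm 𝕜 E} (hp : Continuous p) {f : ι → E}
    {g : ι → ℝ} {x : E} {y : ℝ} (hf : HasSum f x) (hg : HasSum g y) (h : ∀ i, p (f i) ≤ g i) :
    p x ≤ y :=
  le_of_tendsto_of_tendsto' ((hp.tendsto x).comp hf) hg fun s =>
    (p.map_sum_le s f).trans (sum_le_sum fun i _ => h i)

namespace Matrix

section Rectangular

variable {m n 𝕜 : Type*} [Fintype m] [Fintype n] [DecidableEq m] [DecidableEq n] [NormedField 𝕜]

theorem seminorm_le_sum_norm_mul_single (p : Seminorm 𝕜 (Matrix m n 𝕜)) (X : Matrix m n 𝕜) :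
    p X ≤ ∑ i, ∑ j, ‖X i j‖ * p (single i j 1) := by
  conv_lhs => rw [X.matrix_eq_sum_single]
  refine (p.map_sum_le _ _).trans (sum_le_sum fun i _ => (p.map_sum_le _ _).trans_eq ?_)
  refine sum_congr rfl fun j _ => ?_
  rw [← map_smul_eq_mul, smul_single, smul_eq_mul, mul_one]

theorem continuous_seminorm (p : Seminorm 𝕜 (Matrix m n 𝕜)) : Continuous p := by
  refine Seminorm.continuous_of_continuousAt_zero ?_
  have hbound : Continuous fun X : Matrix m n 𝕜 => ∑ i, ∑ j, ‖X i j‖ * p (single i j 1) := by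
    fun_prop
  have hbound_zero := hbound.tendsto 0
  simp only [zero_apply, norm_zero, zero_mul, sum_const_zero] at hbound_zero
  rw [ContinuousAt, map_zero]
  exact squeeze_zero (fun X => apply_nonneg p X) (seminorm_le_sum_norm_mul_single p) hbound_zero

end Rectangular

section Square

variable {n 𝕜 : Type*} [Fintype n] [DecidableEq n] [NormedField 𝕜]

theorem norm_apply_mul_seminorm_single_le (p : Seminorm 𝕜 (Matrix n n 𝕜))
    (hmul : ∀ A B, p (A * B) ≤ p A * p B) (X : Matrix n n 𝕜) (i j : n) :
    ‖X i j‖ * p (single i j 1) ≤ p (single i i 1) * p X * p (single j j 1) := by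
  have hsandwich : single i i (1 : 𝕜) * X * single j j 1 = X i j • single i j 1 := by
    rw [single_mul_mul_single, smul_single, smul_eq_mul, one_mul, mul_one]
  calc ‖X i j‖ * p (single i j 1) = p (single i i 1 * X * single j j 1) := by
        rw [hsandwich, map_smul_eq_mul]
    _ ≤ p (single i i 1) * p X * p (single j j 1) :=
        (hmul _ _).trans (by gcongr; exact hmul _ _)

theorem summable_of_seminorm_le [CompleteSpace 𝕜] (p : Seminorm 𝕜 (Matrix n n 𝕜))
    (hmul : ∀ A B, p (A * B) ≤ p A * p B) (hdef : ∀ A, p A = 0 → A = 0) {ι : Type*}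
    {f : ι → Matrix n n 𝕜} {g : ι → ℝ} (hg : Summable g) (hfg : ∀ k, p (f k) ≤ g k) :
    Summable f := by
  refine Pi.summable.2 fun i => Pi.summable.2 fun j => ?_
  have hpos : 0 < p (single i j 1) :=
    (apply_nonneg p _).lt_of_ne' fun h => one_ne_zero <| by
      rw [← single_apply_same i j (1 : 𝕜), hdef _ h, zero_apply]
  refine .of_norm_bounded (hg.mul_left (p (single i i 1) * p (single j j 1) / p (single i j 1)))
    fun k => ?_
  rw [div_mul_eq_mul_div, le_div_iff₀ hpos]
  calc ‖f k i j‖ * p (single i j 1) ≤ p (single i i 1) * p (f k) * p (single j j 1) :=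
        norm_apply_mul_seminorm_single_le p hmul (f k) i j
    _ ≤ p (single i i 1) * p (single j j 1) * g k := by
        rw [mul_right_comm]
        gcongr
        exact hfg k

end Square

end Matrix

theorem taylor_truncation_error_le_geom_general {n : ℕ} (α β a : ℝ)
    (ha : 0 < a)
    (nrm : Matrix (Fin n) (Fin n) ℂ → ℝ)
    (hnrm_def : ∀ A, nrm A = 0 ↔ A = 0)
    (hnrm_add : ∀ A B, nrm (A + B) ≤ nrm A + nrm B)
    (hnrm_smul : ∀ (c : ℂ) A, nrm (c • A) = ‖c‖ * nrm A)
    (hnrm_mul : ∀ A B, nrm (A * B) ≤ nrm A * nrm B)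
    (A : Matrix (Fin n) (Fin n) ℂ) (m : ℕ)
    (hΓ : ∀ k : ℕ, m ≤ k → a ^ k ≤ Real.Gamma (α * k + β))
    (b : ℝ) (hb : b = nrm A / a) (hb1 : b < 1) :
    nrm (ML α β A - ∑ k ∈ Finset.range (m + 1), (Real.Gamma (α * k + β))⁻¹ • A ^ k)
      ≤ b ^ (m + 1) / (1 - b) := by
  let p : Seminorm ℂ (Matrix (Fin n) (Fin n) ℂ) := .of nrm hnrm_add hnrm_smul
  have hterm (k : ℕ) :
      p ((Real.Gamma (α * ↑(k + (m + 1)) + β))⁻¹ • A ^ (k + (m + 1))) ≤ b ^ (k + (m + 1)) :=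
    hb ▸ (p.restrictScalars ℝ).map_inv_smul_pow_le hnrm_mul A ha (by omega) (hΓ _ (by omega))
  have hb0 : 0 ≤ b := by rw [hb]; exact div_nonneg (apply_nonneg p A) ha.le
  have hgeom : HasSum (fun k => b ^ (k + (m + 1))) (b ^ (m + 1) / (1 - b)) := by
    simpa only [pow_add, ← div_eq_inv_mul] using
      (hasSum_geometric_of_lt_one hb0 hb1).mul_right (b ^ (m + 1))
  have htail := Matrix.summable_of_seminorm_le p hnrm_mul (fun A => (hnrm_def A).1)
    hgeom.summable hterm
  have hsum : Summable fun k : ℕ => (Real.Gamma (α * k + β))⁻¹ • A ^ k :=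
    (summable_nat_add_iff (m + 1)).1 htail
  rw [ML, ← hsum.sum_add_tsum_nat_add (m + 1), add_sub_cancel_left]
  exact htail.hasSum.seminorm_le_of_bounded (Matrix.continuous_seminorm p) hgeom hterm

/-- Proposition 3: if `Γ(αk+β) ≥ a^k` for all `k ≥ m` and `b := ‖A‖/a < 1`, then the
Taylor truncation error satisfies `R_m(A) ≤ b^{m+1}/(1−b)`, for any submultiplicative
matrix norm induced by a vector norm. -/
theorem taylor_truncation_error_le_geom {n : ℕ} (α β a : ℝ)
    (hα : 0 < α) (hβ : 0 < β) (ha : 0 < a)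
    (nrm : Matrix (Fin n) (Fin n) ℂ → ℝ)
    (hnrm_nonneg : ∀ A, 0 ≤ nrm A)
    (hnrm_def : ∀ A, nrm A = 0 ↔ A = 0)
    (hnrm_add : ∀ A B, nrm (A + B) ≤ nrm A + nrm B)
    (hnrm_smul : ∀ (c : ℂ) A, nrm (c • A) = ‖c‖ * nrm A)
    (hnrm_mul : ∀ A B, nrm (A * B) ≤ nrm A * nrm B)
    (hnrm_one : nrm 1 = 1)
    (A : Matrix (Fin n) (Fin n) ℂ) (m : ℕ)
    (hΓ : ∀ k : ℕ, m ≤ k → a ^ k ≤ Real.Gamma (α * k + β))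
    (b : ℝ) (hb : b = nrm A / a) (hb1 : b < 1) :
    nrm (ML α β A - ∑ k ∈ Finset.range (m + 1), (Real.Gamma (α * k + β))⁻¹ • A ^ k)
      ≤ b ^ (m + 1) / (1 - b) :=
  taylor_truncation_error_le_geom_general α β a ha nrm hnrm_def hnrm_add hnrm_smul hnrm_mul A m hΓ b
    hb hb1
end

section
/- Let T be an n×n complex upper triangular matrix, write T = D + N where D = diag(λ_1,…,λ_n) is its diagonal and N is its strictly upper triangular part, and let z_0 = trace(T)/n. Let d = max{ |λ_i − z_0| : 1 ≤ i ≤ n } and let δ, r be real numbers with r > δ > d. Then for every t ∈ [0, 2π] and every integer k ≥ 1, the matrix (z_0 + r e^{it})I − T is invertible and ‖((z_0 + r e^{it})I − T)^{−k}‖_F ≤ c · ‖(I − |N|)^{−1}‖_F, where c := max{ ((k+j−1)!/(j!(k−1)!)) · (r−δ)^{−k−j} : j = 0, 1, …, n−1 } and |N| denotes the matrix whose entries are the absolute values of the entries of N. -/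
open scoped Matrix
open Real

/-- The Frobenius norm of a complex matrix. -/
noncomputable def frobNorm {n : ℕ} (M : Matrix (Fin n) (Fin n) ℂ) : ℝ :=
  Real.sqrt (∑ i, ∑ j, ‖M i j‖ ^ 2)

/-!
Write `zI - T = D - N` with `D` diagonal, `‖(D i i)⁻¹‖ ≤ x := (r - δ)⁻¹`, and `N` strictly upper
triangular, hence nilpotent. The Neumann series `(D - N)⁻¹ = (∑_{j<n} (D⁻¹N)^j) D⁻¹` is majorized
entrywise by `x ∑_{j<n} (x|N|)^j`, so its `k`-th power is majorized by
`x^k (∑_{j<n} (x|N|)^j)^k = ∑_{s<n} C(k-1+s, s) x^(k+s) |N|^s`, the negative binomial series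
truncated because `|N|^n = 0`. Every coefficient is at most `c`, and `∑_{s<n} |N|^s = (I - |N|)⁻¹`.
-/

open Finset Matrix

open Polynomial PowerSeries in
theorem Polynomial.aeval_trunc_coe_of_pow_eq_zero {S A : Type*} [CommSemiring S] [Semiring A]
    [Algebra S A] {b : A} {n : ℕ} (hb : b ^ n = 0) (p : S[X]) :
    aeval b (trunc n (p : S⟦X⟧)) = aeval b p := by
  rw [aeval_def, eval₂_trunc_eq_sum_range,
    aeval_eq_sum_range' (by omega : p.natDegree < n + (p.natDegree + 1)), sum_range_add]
  simp [pow_add, hb, Algebra.smul_def]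

open Polynomial PowerSeries in
theorem geom_sum_pow_eq_sum_choose_of_pow_eq_zero {R : Type*} [Ring R] {b : R} {n : ℕ}
    (hb : b ^ n = 0) (d : ℕ) :
    (∑ i ∈ range n, b ^ i) ^ (d + 1) = ∑ i ∈ range n, ((d + i).choose d : R) * b ^ i := by
  have aeval_trunc (f : ℤ⟦X⟧) :
      aeval b (trunc n f) = ∑ i ∈ range n, ((PowerSeries.coeff i f : ℤ) : R) * b ^ i := by
    simp [aeval_def, eval₂_trunc_eq_sum_range]
  -- `(∑ X^i)^(d+1)` and `(1 - X)^(-(d+1)) = ∑ C(d+i, d) X^i` agree below degree `n`.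
  calc (∑ i ∈ range n, b ^ i) ^ (d + 1)
      = aeval b ((trunc n (mk 1 : ℤ⟦X⟧)) ^ (d + 1)) := by rw [map_pow, aeval_trunc]; simp
    _ = aeval b (trunc n ((mk 1 : ℤ⟦X⟧) ^ (d + 1))) := by
      rw [← aeval_trunc_coe_of_pow_eq_zero hb, Polynomial.coe_pow, trunc_trunc_pow]
    _ = _ := by rw [mk_one_pow_eq_mk_choose_add, aeval_trunc]; simp

theorem sub_mul_geom_sum_mul_eq_one {R : Type*} [Ring R] {D D' N : R} {n : ℕ} (hD : D * D' = 1)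
    (hN : (D' * N) ^ n = 0) : (D - N) * ((∑ j ∈ range n, (D' * N) ^ j) * D') = 1 := by
  have hfactor : D - N = D * (1 - D' * N) := by rw [mul_sub, mul_one, ← mul_assoc, hD, one_mul]
  rw [hfactor, mul_assoc, ← mul_assoc (1 - D' * N), mul_neg_geom_sum, hN, sub_zero, one_mul, hD]

namespace Matrix

def IsStrictUpperTriangular {m R : Type*} [Preorder m] [Zero R] (A : Matrix m m R) : Prop :=
  ∀ i j, j ≤ i → A i j = 0

namespace IsStrictUpperTriangular

variable {n : ℕ} {R : Type*}

theorem pow_eq_zero [Semiring R] {A : Matrix (Fin n) (Fin n) R}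
    (hA : A.IsStrictUpperTriangular) : A ^ n = 0 := by
  have hvanish (k : ℕ) (i j : Fin n) (hij : (j : ℕ) < i + k) : (A ^ k) i j = 0 := by
    induction k generalizing j with
    | zero => exact one_apply_ne (by rintro rfl; omega)
    | succ k ih =>
      rw [pow_succ, mul_apply]
      refine Finset.sum_eq_zero fun l _ => ?_
      by_cases hlj : j ≤ l
      · rw [hA l j hlj, mul_zero]
      · rw [ih l (by omega), zero_mul]
  ext i j
  exact hvanish n i j (by omega)

theorem diagonal_mul [Semiring R] {A : Matrix (Fin n) (Fin n) R}
    (hA : A.IsStrictUpperTriangular) (d : Fin n → R) :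
    (diagonal d * A).IsStrictUpperTriangular := fun i j hji => by
  rw [Matrix.diagonal_mul, hA i j hji, mul_zero]

theorem map {S : Type*} [Zero R] [Zero S] {A : Matrix (Fin n) (Fin n) R}
    (hA : A.IsStrictUpperTriangular) {f : R → S} (hf : f 0 = 0) :
    (A.map f).IsStrictUpperTriangular := fun i j hji => by
  rw [map_apply, hA i j hji, hf]

end IsStrictUpperTriangular

theorem BlockTriangular.isStrictUpperTriangular_sub_diagonal {m R : Type*} [LinearOrder m]
    [DecidableEq m] [AddGroup R] {T : Matrix m m R} (hT : T.BlockTriangular id) :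
    (T - diagonal fun i => T i i).IsStrictUpperTriangular := by
  intro i j hji
  rcases hji.lt_or_eq with hlt | rfl
  · rw [sub_apply, hT hlt, diagonal_apply_ne _ hlt.ne', sub_zero]
  · rw [sub_apply, diagonal_apply_eq, sub_self]

def IsMajorant {m n α : Type*} [Norm α] (B : Matrix m n ℝ) (A : Matrix m n α) : Prop :=
  ∀ i j, ‖A i j‖ ≤ B i j

theorem isMajorant_map_norm {m n α : Type*} [Norm α] (A : Matrix m n α) :
    (A.map (‖·‖)).IsMajorant A := fun _ _ => le_rfl

namespace IsMajorant

variable {l m n α : Type*} [NormedRing α]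

theorem nonneg {B : Matrix m n ℝ} {A : Matrix m n α} (h : B.IsMajorant A) (i : m) (j : n) :
    0 ≤ B i j :=
  (norm_nonneg _).trans (h i j)

theorem mono {B B' : Matrix m n ℝ} {A : Matrix m n α} (h : B.IsMajorant A)
    (hB : ∀ i j, B i j ≤ B' i j) : B'.IsMajorant A := fun i j => (h i j).trans (hB i j)

theorem sum {ι : Type*} (s : Finset ι) {B : ι → Matrix m n ℝ} {A : ι → Matrix m n α}
    (h : ∀ k ∈ s, (B k).IsMajorant (A k)) : (∑ k ∈ s, B k).IsMajorant (∑ k ∈ s, A k) :=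
  fun i j => by
    rw [sum_apply, sum_apply]
    exact (norm_sum_le _ _).trans (Finset.sum_le_sum fun k hk => h k hk i j)

theorem mul [Fintype m] {B : Matrix l m ℝ} {A : Matrix l m α} {D : Matrix m n ℝ}
    {C : Matrix m n α} (hA : B.IsMajorant A) (hC : D.IsMajorant C) :
    (B * D).IsMajorant (A * C) := fun i j => by
  rw [mul_apply, mul_apply]
  refine (norm_sum_le _ _).trans (Finset.sum_le_sum fun k _ => ?_)
  exact (norm_mul_le _ _).trans (mul_le_mul (hA i k) (hC k j) (norm_nonneg _) (hA.nonneg i k))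

theorem one [DecidableEq n] [NormOneClass α] : (1 : Matrix n n ℝ).IsMajorant (1 : Matrix n n α) :=
  fun i j => by
    rcases eq_or_ne i j with rfl | hij
    · simp
    · simp [one_apply_ne hij]

theorem pow [Fintype n] [DecidableEq n] [NormOneClass α] {B : Matrix n n ℝ} {A : Matrix n n α}
    (h : B.IsMajorant A) (k : ℕ) : (B ^ k).IsMajorant (A ^ k) := by
  induction k with
  | zero => simpa using one
  | succ k ih => simpa only [pow_succ] using ih.mul h

theorem diagonal [DecidableEq n] {x : n → ℝ} {d : n → α} (h : ∀ i, ‖d i‖ ≤ x i) :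
    (diagonal x).IsMajorant (diagonal d) := fun i j => by
  rcases eq_or_ne i j with rfl | hij
  · simpa using h i
  · simp [diagonal_apply_ne _ hij]

theorem smul_sum_of_coeff_le {ι : Type*} {s : Finset ι} {a : ι → ℝ} {B : ι → Matrix m n ℝ}
    {A : Matrix m n α} {c : ℝ} (h : (∑ k ∈ s, a k • B k).IsMajorant A) (ha : ∀ k ∈ s, a k ≤ c)
    (hB : ∀ k ∈ s, ∀ i j, 0 ≤ B k i j) : (c • ∑ k ∈ s, B k).IsMajorant A :=
  h.mono fun i j => by
    simp only [Matrix.sum_apply, Matrix.smul_apply, smul_eq_mul, Finset.mul_sum]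
    gcongr with k hk
    exacts [hB k hk i j, ha k hk]

end IsMajorant

variable {𝕜 : Type*} [NormedField 𝕜] {n : ℕ} {d : Fin n → 𝕜} {N : Matrix (Fin n) (Fin n) 𝕜}

theorem diagonal_sub_mul_neumann_eq_one (hd : ∀ i, d i ≠ 0) (hN : N.IsStrictUpperTriangular) :
    (diagonal d - N) *
      ((∑ j ∈ range n, (diagonal (fun i => (d i)⁻¹) * N) ^ j) * diagonal (fun i => (d i)⁻¹))
      = 1 := by
  refine sub_mul_geom_sum_mul_eq_one ?_ (hN.diagonal_mul _).pow_eq_zero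
  rw [diagonal_mul_diagonal, ← diagonal_one]
  exact congrArg diagonal (funext fun i => mul_inv_cancel₀ (hd i))

theorem isMajorant_inv_diagonal_sub_pow {ρ : ℝ} (hρ : 0 < ρ) (hd : ∀ i, ρ ≤ ‖d i‖)
    (hN : N.IsStrictUpperTriangular) (m : ℕ) :
    (∑ s ∈ range n, ((m + s).choose m * ρ⁻¹ ^ (m + 1 + s)) • N.map (‖·‖) ^ s).IsMajorant
      ((diagonal d - N)⁻¹ ^ (m + 1)) := by
  set x := ρ⁻¹
  set B := N.map (‖·‖)
  have hd0 (i : Fin n) : d i ≠ 0 := norm_pos_iff.mp (hρ.trans_le (hd i))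
  have hx (i : Fin n) : ‖(d i)⁻¹‖ ≤ x := by rw [norm_inv]; exact inv_anti₀ hρ (hd i)
  have hDN : (x • B).IsMajorant (diagonal (fun i => (d i)⁻¹) * N) := by
    simpa only [smul_eq_diagonal_mul] using (IsMajorant.diagonal hx).mul (isMajorant_map_norm N)
  have hinv : (x • ∑ j ∈ range n, (x • B) ^ j).IsMajorant (diagonal d - N)⁻¹ := by
    rw [inv_eq_right_inv (diagonal_sub_mul_neumann_eq_one hd0 hN), smul_eq_mul_diagonal]
    exact (IsMajorant.sum _ fun j _ => hDN.pow j).mul (IsMajorant.diagonal hx)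
  have hxB : (x • B) ^ n = 0 := by rw [smul_pow, (hN.map norm_zero).pow_eq_zero, smul_zero]
  have hpow : (x • ∑ j ∈ range n, (x • B) ^ j) ^ (m + 1)
      = ∑ s ∈ range n, ((m + s).choose m * x ^ (m + 1 + s)) • B ^ s := by
    rw [smul_pow, geom_sum_pow_eq_sum_choose_of_pow_eq_zero hxB, Finset.smul_sum]
    refine Finset.sum_congr rfl fun s _ => ?_
    rw [smul_pow, ← nsmul_eq_mul, ← Nat.cast_smul_eq_nsmul ℝ, smul_smul, smul_smul, pow_add,
      pow_add]
    ring_nf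
  exact hpow ▸ hinv.pow (m + 1)

theorem inv_one_sub_map_norm_eq {n : ℕ} {N : Matrix (Fin n) (Fin n) ℂ}
    (hN : N.IsStrictUpperTriangular) :
    (1 - N.map fun x => ((‖x‖ : ℝ) : ℂ))⁻¹
      = (∑ s ∈ range n, N.map (‖·‖) ^ s).map Complex.ofRealHom := by
  have hmap : (N.map fun x => ((‖x‖ : ℝ) : ℂ)) = Complex.ofRealHom.mapMatrix (N.map (‖·‖)) := rfl
  rw [hmap, ← RingHom.mapMatrix_apply]
  refine inv_eq_right_inv ?_
  rw [← map_one Complex.ofRealHom.mapMatrix, ← map_sub, ← map_mul, mul_neg_geom_sum,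
    (hN.map norm_zero).pow_eq_zero, sub_zero, map_one]

end Matrix

theorem frobNorm_le_mul_of_isMajorant {n : ℕ} {A : Matrix (Fin n) (Fin n) ℂ}
    {E : Matrix (Fin n) (Fin n) ℝ} {c : ℝ} (hc : 0 ≤ c) (h : (c • E).IsMajorant A) :
    frobNorm A ≤ c * frobNorm (E.map Complex.ofRealHom) := by
  rw [frobNorm, frobNorm, ← Real.sqrt_sq hc, ← Real.sqrt_mul (sq_nonneg c)]
  simp_rw [Finset.mul_sum, ← mul_pow]
  gcongr with i _ j _
  simpa [Complex.norm_real] using (h i j).trans (mul_le_mul_of_nonneg_left (le_abs_self _) hc)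

theorem factorial_div_mul_zpow_eq_choose_mul_inv_pow (m j : ℕ) (y : ℝ) :
    ((m + 1 + j - 1).factorial : ℝ) / ((j.factorial : ℝ) * ((m + 1 - 1).factorial : ℝ))
        * y ^ (-((m + 1 : ℕ) : ℤ) - j)
      = (m + j).choose m * y⁻¹ ^ (m + 1 + j) := by
  have hexp : -((m + 1 : ℕ) : ℤ) - j = -((m + 1 + j : ℕ) : ℤ) := by push_cast; ring
  rw [Nat.cast_add_choose, hexp, _root_.zpow_neg, zpow_natCast, inv_pow, Nat.add_sub_cancel,
    show m + 1 + j - 1 = m + j by omega, mul_comm (j.factorial : ℝ)]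

theorem resolvent_pow_frobNorm_le_general {n : ℕ} (hn : 0 < n)
    (T : Matrix (Fin n) (Fin n) ℂ)
    (hT : T.BlockTriangular (id : Fin n → Fin n))
    (N : Matrix (Fin n) (Fin n) ℂ)
    (hN : N = T - Matrix.diagonal (fun i => T i i))
    (z₀ : ℂ)
    (d δ r : ℝ)
    (hd : d = Finset.univ.sup' ⟨⟨0, hn⟩, Finset.mem_univ _⟩
      (fun i : Fin n => ‖T i i - z₀‖))
    (hδd : d < δ) (hrδ : δ < r) :
    ∀ t ∈ Set.Icc (0 : ℝ) (2 * π), ∀ k : ℕ, 1 ≤ k →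
      IsUnit ((z₀ + r * Complex.exp (t * Complex.I)) • (1 : Matrix (Fin n) (Fin n) ℂ) - T) ∧
      frobNorm ((((z₀ + r * Complex.exp (t * Complex.I)) •
            (1 : Matrix (Fin n) (Fin n) ℂ) - T)⁻¹) ^ k) ≤
        ((Finset.range n).sup' ⟨0, Finset.mem_range.mpr hn⟩
            (fun j : ℕ => ((k + j - 1).factorial : ℝ) /
              ((j.factorial : ℝ) * ((k - 1).factorial : ℝ)) * (r - δ) ^ (-(k : ℤ) - j))) *
          frobNorm ((1 - N.map (fun x => ((‖x‖ : ℝ) : ℂ)))⁻¹) := by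
  intro t _ k hk
  obtain ⟨m, rfl⟩ : ∃ m, k = m + 1 := ⟨k - 1, by omega⟩
  set z := z₀ + r * Complex.exp (t * Complex.I)
  have hρ : 0 < r - δ := sub_pos.mpr hrδ
  have hgap (i : Fin n) : r - δ ≤ ‖z - T i i‖ := by
    have hTi : ‖T i i - z₀‖ ≤ d := hd ▸ le_sup' (fun i : Fin n => ‖T i i - z₀‖) (mem_univ i)
    have hz : ‖z - z₀‖ = r := by
      simp [z, ((norm_nonneg _).trans hTi).trans (hδd.trans hrδ).le]
    linarith [norm_sub_le_norm_sub_add_norm_sub z (T i i) z₀]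
  have hNs : N.IsStrictUpperTriangular := hN ▸ hT.isStrictUpperTriangular_sub_diagonal
  have hM : z • (1 : Matrix (Fin n) (Fin n) ℂ) - T = diagonal (fun i => z - T i i) - N := by
    rw [hN, smul_one_eq_diagonal, ← diagonal_sub]; abel
  rw [hM, inv_one_sub_map_norm_eq hNs]
  refine ⟨IsUnit.of_mul_eq_one _ (diagonal_sub_mul_neumann_eq_one
    (fun i => norm_pos_iff.mp (hρ.trans_le (hgap i))) hNs), ?_⟩
  simp only [factorial_div_mul_zpow_eq_choose_mul_inv_pow]
  refine frobNorm_le_mul_of_isMajorant (le_sup'_of_le _ (mem_range.mpr hn)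
    (mul_nonneg (Nat.cast_nonneg _) (pow_nonneg (inv_pos.mpr hρ).le _))) ?_
  exact (isMajorant_inv_diagonal_sub_pow hρ hgap hNs m).smul_sum_of_coeff_le
    (fun _ hs => by apply le_sup' _ hs) fun s _ => ((isMajorant_map_norm N).pow s).nonneg

/-- Bound on the Frobenius norm of powers of the resolvent of an upper triangular
matrix along a circle of radius `r > δ > d` centered at `z₀ = trace T / n`. -/
theorem resolvent_pow_frobNorm_le {n : ℕ} (hn : 0 < n)
    (T : Matrix (Fin n) (Fin n) ℂ)
    (hT : T.BlockTriangular (id : Fin n → Fin n))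
    (N : Matrix (Fin n) (Fin n) ℂ)
    (hN : N = T - Matrix.diagonal (fun i => T i i))
    (z₀ : ℂ) (hz₀ : z₀ = Matrix.trace T / n)
    (d δ r : ℝ)
    (hd : d = Finset.univ.sup' ⟨⟨0, hn⟩, Finset.mem_univ _⟩
      (fun i : Fin n => ‖T i i - z₀‖))
    (hδd : d < δ) (hrδ : δ < r) :
    ∀ t ∈ Set.Icc (0 : ℝ) (2 * π), ∀ k : ℕ, 1 ≤ k →
      IsUnit ((z₀ + r * Complex.exp (t * Complex.I)) • (1 : Matrix (Fin n) (Fin n) ℂ) - T) ∧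
      frobNorm ((((z₀ + r * Complex.exp (t * Complex.I)) •
            (1 : Matrix (Fin n) (Fin n) ℂ) - T)⁻¹) ^ k) ≤
        ((Finset.range n).sup' ⟨0, Finset.mem_range.mpr hn⟩
            (fun j : ℕ => ((k + j - 1).factorial : ℝ) /
              ((j.factorial : ℝ) * ((k - 1).factorial : ℝ)) * (r - δ) ^ (-(k : ℤ) - j))) *
          frobNorm ((1 - N.map (fun x => ((‖x‖ : ℝ) : ℂ)))⁻¹) :=
  resolvent_pow_frobNorm_le_general hn T hT N hN z₀ d δ r hd hδd hrδ
end

section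
/- Let α, β > 0 and let t₁₁, t₁₂, t₂₂ ∈ ℂ with t₁₁ ≠ t₂₂. Then the Mittag-Leffler function of the 2×2 upper triangular matrix T = [[t₁₁, t₁₂], [0, t₂₂]] is E_{α,β}(T) = [[f₁₁, f₁₂], [0, f₂₂]], where f₁₁ = E_{α,β}(t₁₁), f₂₂ = E_{α,β}(t₂₂) and f₁₂ = t₁₂ · (f₂₂ − f₁₁)/(t₂₂ − t₁₁). -/
/-!
Since `(T - t₁₁) (T - t₂₂) = 0`, the powers of `T` are given by Lagrange interpolation at its two
eigenvalues: `(t₂₂ - t₁₁) Tᵏ = t₁₁ᵏ (t₂₂ - T) + t₂₂ᵏ (T - t₁₁)`. Summing against `1 / Γ(αk + β)`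
gives the same identity with `Tᵏ` replaced by `E_{α,β}(T)` and `tᵢᵢᵏ` by `E_{α,β}(tᵢᵢ)`, once the
scalar series are known to converge. They converge everywhere by the ratio test, because the
log-convexity of `Γ` gives `Γ(x) (x - 1)^α ≤ Γ(x + α)`.
-/

open scoped Matrix

/-- The scalar Mittag-Leffler function `E_{α,β}(z) = ∑_{k=0}^∞ z^k / Γ(αk+β)`. -/
noncomputable def MLc (α β : ℝ) (z : ℂ) : ℂ :=
  ∑' k : ℕ, z ^ k / (Real.Gamma (α * k + β) : ℂ)

open Filter Topology

theorem Real.Gamma_mul_rpow_le_Gamma_add {x s : ℝ} (hx : 1 < x) (hs : 0 < s) :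
    Real.Gamma x * (x - 1) ^ s ≤ Real.Gamma (x + s) := by
  have hx₁ : 0 < x - 1 := sub_pos.mpr hx
  have hΓ : Real.Gamma x = (x - 1) * Real.Gamma (x - 1) := by
    simpa using Real.Gamma_add_one hx₁.ne'
  -- log-convexity: the slope `log (x - 1)` of `log ∘ Gamma` on `[x - 1, x]` is at most its slope
  -- on `[x, x + s]`
  have hslope := Real.convexOn_log_Gamma.slope_mono_adjacent (x := x - 1) (y := x) (z := x + s)
    hx₁ (Set.mem_Ioi.mpr (by linarith)) (by linarith) (by linarith)
  have hpos : 0 < Real.Gamma (x - 1) := Real.Gamma_pos_of_pos hx₁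
  simp only [Function.comp_apply, hΓ, Real.log_mul hx₁.ne' hpos.ne', sub_sub_cancel, div_one,
    add_sub_cancel_left, add_sub_cancel_right, le_div_iff₀ hs] at hslope
  rw [← Real.log_le_log_iff (by positivity) (Real.Gamma_pos_of_pos (by linarith)), hΓ,
    Real.log_mul (by positivity) (by positivity), Real.log_mul hx₁.ne' hpos.ne', Real.log_rpow hx₁]
  linarith

theorem Real.tendsto_Gamma_div_Gamma_add_atTop {s : ℝ} (hs : 0 < s) :
    Tendsto (fun x => Real.Gamma x / Real.Gamma (x + s)) atTop (𝓝 0) := by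
  have hlim : Tendsto (fun x : ℝ => (x - 1) ^ (-s)) atTop (𝓝 0) :=
    (tendsto_rpow_neg_atTop hs).comp (tendsto_atTop_add_const_right _ (-1) tendsto_id)
  refine tendsto_of_tendsto_of_tendsto_of_le_of_le' tendsto_const_nhds hlim ?_ ?_
  · filter_upwards [eventually_gt_atTop 0] with x hx
    exact div_nonneg (Real.Gamma_pos_of_pos hx).le (Real.Gamma_pos_of_pos (by linarith)).le
  · filter_upwards [eventually_gt_atTop 1] with x hx
    have hx₁ : 0 < x - 1 := sub_pos.mpr hx
    rw [div_le_iff₀ (Real.Gamma_pos_of_pos (by linarith)), Real.rpow_neg hx₁.le, mul_comm,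
      ← div_eq_mul_inv, le_div_iff₀ (by positivity)]
    exact Real.Gamma_mul_rpow_le_Gamma_add hx hs

theorem ofScalars_inv_Gamma_radius_eq_top (E : Type*) [NormedRing E] [NormedAlgebra ℂ E]
    {α : ℝ} (hα : 0 < α) (β : ℝ) :
    (FormalMultilinearSeries.ofScalars E
      fun k : ℕ => ((Real.Gamma (α * k + β) : ℂ))⁻¹).radius = ⊤ := by
  have hlin : Tendsto (fun k : ℕ => α * k + β) atTop atTop :=
    tendsto_atTop_add_const_right _ β (tendsto_natCast_atTop_atTop.const_mul_atTop hα)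
  have hpos : ∀ᶠ k : ℕ in atTop, 0 < α * k + β := hlin.eventually_gt_atTop 0
  refine FormalMultilinearSeries.ofScalars_radius_eq_top_of_tendsto _ _
    (hpos.mono fun k hk => by simpa using (Real.Gamma_pos_of_pos hk).ne') ?_
  refine ((Real.tendsto_Gamma_div_Gamma_add_atTop hα).comp hlin).congr' ?_
  filter_upwards [hpos] with k hk
  have hΓ := Real.Gamma_pos_of_pos hk
  have hΓ' : 0 < Real.Gamma (α * k + β + α) := Real.Gamma_pos_of_pos (by linarith)
  rw [show α * ↑(k + 1) + β = α * k + β + α by push_cast; ring]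
  simp only [Function.comp_apply, norm_inv, Complex.norm_real, Real.norm_eq_abs,
    abs_of_pos hΓ, abs_of_pos hΓ', inv_div_inv]

theorem hasSum_MLc {α : ℝ} (hα : 0 < α) (β : ℝ) (z : ℂ) :
    HasSum (fun k : ℕ => z ^ k / (Real.Gamma (α * k + β) : ℂ)) (MLc α β z) := by
  have h := (FormalMultilinearSeries.ofScalars ℂ
    fun k : ℕ => ((Real.Gamma (α * k + β) : ℂ))⁻¹).summable (x := z)
    (by simp [ofScalars_inv_Gamma_radius_eq_top ℂ hα β])
  simp only [FormalMultilinearSeries.ofScalars_apply_eq, smul_eq_mul, ← div_eq_inv_mul] at h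
  exact h.hasSum

theorem sub_smul_pow_of_sub_mul_sub_eq_zero {K R : Type*} [CommRing K] [Ring R] [Algebra K R]
    {A : R} {a c : K} (hA : (A - a • 1) * (A - c • 1) = 0) (k : ℕ) :
    (c - a) • A ^ k = a ^ k • (c • 1 - A) + c ^ k • (A - a • 1) := by
  have hA2 : A * A = (a + c) • A - (a * c) • 1 := by
    simp only [sub_mul, mul_sub, smul_mul_assoc, mul_smul_comm, one_mul, mul_one] at hA
    linear_combination (norm := module) hA
  induction k with
  | zero => simp only [pow_zero, one_smul, sub_smul]; abel
  | succ k ih =>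
    rw [pow_succ', ← mul_smul_comm, ih]
    simp only [mul_add, mul_sub, mul_smul_comm, mul_one, hA2]
    module

theorem ML_eq_of_sub_mul_sub_eq_zero {n : ℕ} {α : ℝ} (hα : 0 < α) (β : ℝ)
    {A : Matrix (Fin n) (Fin n) ℂ} {a c : ℂ} (hac : a ≠ c) (hA : (A - a • 1) * (A - c • 1) = 0) :
    ML α β A = (c - a)⁻¹ • (MLc α β a • (c • 1 - A) + MLc α β c • (A - a • 1)) := by
  refine HasSum.tsum_eq ?_
  convert (((hasSum_MLc hα β a).smul_const (c • 1 - A)).add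
    ((hasSum_MLc hα β c).smul_const (A - a • 1))).const_smul (c - a)⁻¹ using 1
  funext k
  rw [div_eq_inv_mul, div_eq_inv_mul, mul_smul, mul_smul, ← smul_add,
    ← sub_smul_pow_of_sub_mul_sub_eq_zero hA, smul_comm,
    inv_smul_smul₀ (sub_ne_zero.mpr hac.symm), ← Complex.ofReal_inv, Complex.coe_smul]

theorem Matrix.fin_two_upper_sub_mul_sub_eq_zero {R : Type*} [CommRing R] (a b c : R) :
    (!![a, b; 0, c] - a • 1) * (!![a, b; 0, c] - c • 1) = 0 := by
  ext i j
  fin_cases i <;> fin_cases j <;> simp [Matrix.mul_apply, Fin.sum_univ_two]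

theorem mittagLeffler_two_by_two_general (α β : ℝ) (hα : 0 < α)
    (t₁₁ t₁₂ t₂₂ : ℂ) (h : t₁₁ ≠ t₂₂) :
    ML α β !![t₁₁, t₁₂; 0, t₂₂] =
      !![MLc α β t₁₁, t₁₂ * (MLc α β t₂₂ - MLc α β t₁₁) / (t₂₂ - t₁₁);
         0, MLc α β t₂₂] := by
  rw [ML_eq_of_sub_mul_sub_eq_zero hα β h
    (Matrix.fin_two_upper_sub_mul_sub_eq_zero t₁₁ t₁₂ t₂₂)]
  have hne : t₂₂ - t₁₁ ≠ 0 := sub_ne_zero.mpr h.symm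
  ext i j
  fin_cases i <;> fin_cases j <;>
    simp only [Matrix.smul_apply, Matrix.add_apply, Matrix.sub_apply, Matrix.one_fin_two,
      Matrix.of_apply, Matrix.cons_val', Matrix.cons_val_zero, Matrix.cons_val_one,
      Matrix.cons_val_fin_one, smul_eq_mul, Fin.zero_eta, Fin.mk_one] <;>
    field_simp <;> ring

/-- The Mittag-Leffler function of a `2×2` upper triangular matrix with distinct
diagonal entries. -/
theorem mittagLeffler_two_by_two (α β : ℝ) (hα : 0 < α) (hβ : 0 < β)
    (t₁₁ t₁₂ t₂₂ : ℂ) (h : t₁₁ ≠ t₂₂) :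
    ML α β !![t₁₁, t₁₂; 0, t₂₂] =
      !![MLc α β t₁₁, t₁₂ * (MLc α β t₂₂ - MLc α β t₁₁) / (t₂₂ - t₁₁);
         0, MLc α β t₂₂] :=
  mittagLeffler_two_by_two_general α β hα t₁₁ t₁₂ t₂₂ h
end
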